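/- arXiv:2105.10597 — 3 statements merged into one kernel-verified Lean document; each statement's English description precedes it below -/
import Mathlib

section
/- Suppose κ₂ > 0, κ₄ > 0, κ₃ < 1, μ_A > 0, and suppose that ℓ̲_B ∈ I_{κ₁,κ₂} (i.e. κ₁ · Φ_{B→A}(κ₂ ℓ̲_B) < 1). Then for the linear mean-field system (λ^A, λ^B), the pair (ℓ̲_B, ℓ̄_B) belongs to U_Φ; in particular ℓ̄_B < ∞, Φ(ℓ̄_B) ≤ ℓ̲_B ≤ ℓ ≤ ℓ̄_B ≤ Φ(ℓ̲_B), and μ_B/(1−κ₃) ≤ ℓ̲_B. -/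
open MeasureTheory Filter Topology Set
open scoped ENNReal

/-- Convolution term `∫₀ᵗ h(t-u) f(u) du`. -/
noncomputable def convK (h f : ℝ → ℝ) (t : ℝ) : ℝ :=
  ∫ u in (0:ℝ)..t, h (t - u) * f u

/-- `L¹` norm on `[0,∞)` of a kernel. -/
noncomputable def l1 (h : ℝ → ℝ) : ℝ :=
  ∫ s in Set.Ioi (0:ℝ), h s

/-- A nonnegative measurable kernel with finite `L¹` norm on `[0,∞)`. -/
def KernelL1 (h : ℝ → ℝ) : Prop :=
  Measurable h ∧ (∀ u, 0 ≤ u → 0 ≤ h u) ∧ IntegrableOn h (Set.Ioi 0)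

/-- A nonnegative integrable kernel vanishing at infinity. -/
def KernelOK (h : ℝ → ℝ) : Prop :=
  KernelL1 h ∧ Tendsto h atTop (𝓝 0)

/-- Properties of the inhibition kernel `Φ_{B→A}`. -/
def InhibOK (Φ : ℝ → ℝ) : Prop :=
  (∃ K, 0 ≤ K ∧ ∀ x y, 0 ≤ x → 0 ≤ y → |Φ x - Φ y| ≤ K * |x - y|) ∧
  AntitoneOn Φ (Set.Ici 0) ∧ Φ 0 = 1 ∧
  (∀ x, 0 ≤ x → 0 ≤ Φ x ∧ Φ x ≤ 1) ∧
  Tendsto Φ atTop (𝓝 0)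

/-- Properties of the feedback kernel `Φ_{A→B}`. -/
def FeedOK (Φ : ℝ → ℝ) : Prop :=
  (∃ K, 0 ≤ K ∧ ∀ x y, 0 ≤ x → 0 ≤ y → |Φ x - Φ y| ≤ K * |x - y|) ∧
  MonotoneOn Φ (Set.Ici 0) ∧ Φ 0 = 0 ∧
  (∀ x, 0 ≤ x → 0 ≤ Φ x) ∧
  Tendsto Φ atTop atTop

/-- The general mean-field system of intensities. -/
def IsGenSys (α : ℝ) (h₁ h₂ h₃ h₄ ΦA ΦB ΦBA ΦAB lA lB : ℝ → ℝ) : Prop :=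
  Continuous lA ∧ Continuous lB ∧ (∀ t, 0 ≤ lA t) ∧ (∀ t, 0 ≤ lB t) ∧
  (∀ t, 0 ≤ t →
    lA t = ΦA (α * convK h₁ lA t) * ΦBA ((1 - α) * convK h₂ lB t)) ∧
  (∀ t, 0 ≤ t →
    lB t = ΦB ((1 - α) * convK h₃ lB t) + ΦAB (α * convK h₄ lA t))

/-- The linear mean-field system: `Φ_A(x) = μ_A + x` and `Φ_B(x) = μ_B + x`. -/
def IsLinSys (α : ℝ) (h₁ h₂ h₃ h₄ ΦBA ΦAB : ℝ → ℝ) (μA μB : ℝ)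
    (lA lB : ℝ → ℝ) : Prop :=
  IsGenSys α h₁ h₂ h₃ h₄ (fun x => μA + x) (fun x => μB + x) ΦBA ΦAB lA lB

/-- `limsup_{t→∞} f(t)` with values in `[0,∞]`. -/
noncomputable def elimsup (f : ℝ → ℝ) : ℝ≥0∞ :=
  Filter.limsup (fun t => ENNReal.ofReal (f t)) Filter.atTop

/-- `liminf_{t→∞} f(t)` with values in `[0,∞]`. -/
noncomputable def eliminf (f : ℝ → ℝ) : ℝ≥0∞ :=
  Filter.liminf (fun t => ENNReal.ofReal (f t)) Filter.atTop

/-- The domain `I_{κ₁,κ₂} = {x ≥ 0 : κ₁ Φ_{B→A}(κ₂ x) < 1}`. -/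
def Idom (κ₁ κ₂ : ℝ) (ΦBA : ℝ → ℝ) : Set ℝ :=
  {x : ℝ | 0 ≤ x ∧ κ₁ * ΦBA (κ₂ * x) < 1}

/-- `Ψ₁(x) = μ_A Φ_{B→A}(κ₂x)/(1 - κ₁Φ_{B→A}(κ₂x))`. -/
noncomputable def Psi1 (μA κ₁ κ₂ : ℝ) (ΦBA : ℝ → ℝ) (x : ℝ) : ℝ :=
  μA * ΦBA (κ₂ * x) / (1 - κ₁ * ΦBA (κ₂ * x))

/-- `Ψ₂(x) = (μ_B + Φ_{A→B}(κ₄x))/(1-κ₃)`. -/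
noncomputable def Psi2 (μB κ₃ κ₄ : ℝ) (ΦAB : ℝ → ℝ) (x : ℝ) : ℝ :=
  (μB + ΦAB (κ₄ * x)) / (1 - κ₃)

/-- The fixed-point map `Φ = Ψ₂ ∘ Ψ₁`. -/
noncomputable def PhiMap (μA μB κ₁ κ₂ κ₃ κ₄ : ℝ) (ΦBA ΦAB : ℝ → ℝ) (x : ℝ) : ℝ :=
  Psi2 μB κ₃ κ₄ ΦAB (Psi1 μA κ₁ κ₂ ΦBA x)

/-- The set `U_Φ` of admissible pairs `(u,v)`. -/
def UPhi (μA μB κ₁ κ₂ κ₃ κ₄ : ℝ) (ΦBA ΦAB : ℝ → ℝ) (ℓ : ℝ) : Set (ℝ × ℝ) :=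
  {p : ℝ × ℝ | p.1 ∈ Idom κ₁ κ₂ ΦBA ∧ p.2 ∈ Idom κ₁ κ₂ ΦBA ∧
    PhiMap μA μB κ₁ κ₂ κ₃ κ₄ ΦBA ΦAB p.2 ≤ p.1 ∧ p.1 ≤ ℓ ∧ ℓ ≤ p.2 ∧
    p.2 ≤ PhiMap μA μB κ₁ κ₂ κ₃ κ₄ ΦBA ΦAB p.1 ∧ μB / (1 - κ₃) ≤ p.1}


/-!
Let `m ≤ M` be the liminf and limsup of `λ^B`, and `m_A ≤ M_A` those of `λ^A`. Eventually
`λ^B ≥ m - ε`, so the inhibition factor is eventually at most `Φ_{B→A}(κ₂ m) + ε` and `λ^A`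
satisfies a renewal inequality `λ^A ≤ C + c (h₁ ∗ λ^A)` with `c ‖h₁‖₁ < 1`. Evaluating it at a
running maximum shows that `λ^A` is bounded; passing to the limsup then gives
`M_A ≤ Ψ₁(m)`, and the equation for `λ^B` gives `M ≤ Ψ₂(M_A) ≤ Φ(m)`. The same argument with
liminfs gives `m_A ≥ Ψ₁(M)` and `m ≥ Ψ₂(m_A) ≥ Φ(M)`. As `Φ` is antitone on `I_{κ₁,κ₂}`, these
inequalities squeeze its fixed point `ℓ` between `m` and `M`.
-/

section Kernel

variable {h f : ℝ → ℝ}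

theorem KernelL1.intervalIntegrable (hk : KernelL1 h) {x y : ℝ} (hx : 0 ≤ x) (hxy : x ≤ y) :
    IntervalIntegrable h volume x y := by
  rw [intervalIntegrable_iff_integrableOn_Ioc_of_le hxy]
  exact hk.2.2.mono_set fun u hu => hx.trans_lt hu.1

theorem KernelL1.intervalIntegrable_comp_sub (hk : KernelL1 h) {t a b : ℝ} (hab : a ≤ b)
    (hbt : b ≤ t) : IntervalIntegrable (fun u => h (t - u)) volume a b := by
  simpa using ((hk.intervalIntegrable (sub_nonneg.2 hbt) (sub_le_sub_left hab t)).comp_sub_left t).symm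

theorem KernelL1.intervalIntegrable_conv (hk : KernelL1 h) (hf : Continuous f) {t a b : ℝ}
    (hab : a ≤ b) (hbt : b ≤ t) : IntervalIntegrable (fun u => h (t - u) * f u) volume a b :=
  (hk.intervalIntegrable_comp_sub hab hbt).mul_continuousOn hf.continuousOn

theorem l1_nonneg (hk : KernelL1 h) : 0 ≤ l1 h :=
  setIntegral_nonneg measurableSet_Ioi fun u hu => hk.2.1 u (le_of_lt hu)

theorem integral_le_l1 (hk : KernelL1 h) {x y : ℝ} (hx : 0 ≤ x) (hxy : x ≤ y) :
    ∫ u in x..y, h u ≤ l1 h := by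
  rw [intervalIntegral.integral_of_le hxy]
  exact setIntegral_mono_set hk.2.2
    ((ae_restrict_iff' measurableSet_Ioi).2 (ae_of_all _ fun u hu => hk.2.1 u (le_of_lt hu)))
    (LE.le.eventuallyLE fun u hu => hx.trans_lt hu.1)

theorem tendsto_integral_sub_l1 (hk : KernelL1 h) (T : ℝ) :
    Tendsto (fun t => ∫ u in (0:ℝ)..(t - T), h u) atTop (𝓝 (l1 h)) :=
  intervalIntegral_tendsto_integral_Ioi 0 hk.2.2 (tendsto_atTop_add_const_right _ (-T) tendsto_id)

theorem tendsto_integral_window (hk : KernelL1 h) (T : ℝ) :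
    Tendsto (fun t => ∫ u in (t - T)..t, h u) atTop (𝓝 0) := by
  have hlim := (tendsto_integral_sub_l1 hk 0).sub (tendsto_integral_sub_l1 hk T)
  rw [sub_self] at hlim
  refine hlim.congr' ?_
  filter_upwards [eventually_ge_atTop (max T 0)] with t ht
  rw [sub_zero]
  exact intervalIntegral.integral_interval_sub_left
    (hk.intervalIntegrable le_rfl (by linarith [le_max_right T 0]))
    (hk.intervalIntegrable le_rfl (by linarith [le_max_left T 0]))

theorem conv_nonneg (hk : KernelL1 h) (hf0 : ∀ u, 0 ≤ f u) {t : ℝ} (ht : 0 ≤ t) :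
    0 ≤ convK h f t :=
  intervalIntegral.integral_nonneg ht fun u hu => mul_nonneg (hk.2.1 _ (by linarith [hu.2])) (hf0 u)

theorem integral_kernel_mul_le (hk : KernelL1 h) (hf : Continuous f) {t a b S : ℝ} (hab : a ≤ b)
    (hbt : b ≤ t) (hS : ∀ u ∈ Icc a b, f u ≤ S) :
    ∫ u in a..b, h (t - u) * f u ≤ S * ∫ u in (t - b)..(t - a), h u :=
  calc ∫ u in a..b, h (t - u) * f u ≤ ∫ u in a..b, h (t - u) * S :=
        intervalIntegral.integral_mono_on hab (hk.intervalIntegrable_conv hf hab hbt)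
          ((hk.intervalIntegrable_comp_sub hab hbt).mul_const S)
          fun u hu => mul_le_mul_of_nonneg_left (hS u hu) (hk.2.1 _ (by linarith [hu.2]))
    _ = S * ∫ u in (t - b)..(t - a), h u := by
        rw [intervalIntegral.integral_mul_const, intervalIntegral.integral_comp_sub_left, mul_comm]

theorem le_integral_kernel_mul (hk : KernelL1 h) (hf : Continuous f) {t a b r : ℝ} (hab : a ≤ b)
    (hbt : b ≤ t) (hr : ∀ u ∈ Icc a b, r ≤ f u) :
    r * ∫ u in (t - b)..(t - a), h u ≤ ∫ u in a..b, h (t - u) * f u :=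
  calc r * ∫ u in (t - b)..(t - a), h u = ∫ u in a..b, h (t - u) * r := by
        rw [intervalIntegral.integral_mul_const, intervalIntegral.integral_comp_sub_left, mul_comm]
    _ ≤ ∫ u in a..b, h (t - u) * f u :=
        intervalIntegral.integral_mono_on hab ((hk.intervalIntegrable_comp_sub hab hbt).mul_const r)
          (hk.intervalIntegrable_conv hf hab hbt)
          fun u hu => mul_le_mul_of_nonneg_left (hr u hu) (hk.2.1 _ (by linarith [hu.2]))

theorem conv_le_mul (hk : KernelL1 h) (hf : Continuous f) {t S : ℝ} (ht : 0 ≤ t) (hS0 : 0 ≤ S)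
    (hS : ∀ u ∈ Icc 0 t, f u ≤ S) : convK h f t ≤ S * l1 h :=
  calc convK h f t ≤ S * ∫ u in (t - t)..(t - 0), h u := integral_kernel_mul_le hk hf ht le_rfl hS
    _ ≤ S * l1 h := mul_le_mul_of_nonneg_left (integral_le_l1 hk (by simp) (by linarith)) hS0

theorem conv_le_of_le (hk : KernelL1 h) (hf : Continuous f) {t T B S : ℝ} (hT : 0 ≤ T)
    (hTt : T ≤ t) (hS0 : 0 ≤ S) (hB : ∀ u ∈ Icc 0 T, f u ≤ B) (hS : ∀ u ∈ Icc T t, f u ≤ S) :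
    convK h f t ≤ B * (∫ u in (t - T)..t, h u) + S * l1 h := by
  rw [convK, ← intervalIntegral.integral_add_adjacent_intervals
    (hk.intervalIntegrable_conv hf hT hTt) (hk.intervalIntegrable_conv hf hTt le_rfl)]
  have hhead := integral_kernel_mul_le hk hf hT hTt hB
  have htail := integral_kernel_mul_le hk hf hTt le_rfl hS
  have hl1 : ∫ u in (t - t)..(t - T), h u ≤ l1 h := integral_le_l1 hk (by simp) (by linarith)
  rw [sub_zero] at hhead
  exact add_le_add hhead (htail.trans (mul_le_mul_of_nonneg_left hl1 hS0))

theorem le_conv_of_le (hk : KernelL1 h) (hf : Continuous f) (hf0 : ∀ u, 0 ≤ f u) {t T r : ℝ}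
    (hT : 0 ≤ T) (hTt : T ≤ t) (hr : ∀ u ∈ Icc T t, r ≤ f u) :
    r * ∫ u in (0:ℝ)..(t - T), h u ≤ convK h f t := by
  rw [convK, ← intervalIntegral.integral_add_adjacent_intervals
    (hk.intervalIntegrable_conv hf hT hTt) (hk.intervalIntegrable_conv hf hTt le_rfl)]
  have hhead : 0 ≤ ∫ u in (0:ℝ)..T, h (t - u) * f u :=
    intervalIntegral.integral_nonneg hT
      fun u hu => mul_nonneg (hk.2.1 _ (by linarith [hu.2])) (hf0 u)
  have htail := le_integral_kernel_mul hk hf hTt le_rfl hr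
  rw [sub_self] at htail
  exact htail.trans (le_add_of_nonneg_left hhead)

end Kernel

section Asymptotic

variable {ι : Type*} {l : Filter ι} {f g : ι → ℝ} {x y c : ℝ}

-- `LimsupLE l g x` and `LiminfGE l g x` say `limsup_l g ≤ x` and `x ≤ liminf_l g` in the extended
-- reals; `Filter.limsup` on `ℝ` would need boundedness side conditions.
def LimsupLE (l : Filter ι) (g : ι → ℝ) (x : ℝ) : Prop :=
  ∀ y, x < y → ∀ᶠ t in l, g t ≤ y

def LiminfGE (l : Filter ι) (g : ι → ℝ) (x : ℝ) : Prop :=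
  ∀ y, y < x → ∀ᶠ t in l, y ≤ g t

namespace LimsupLE

theorem of_eventually_le (h : ∀ᶠ t in l, g t ≤ x) : LimsupLE l g x :=
  fun _ hy => h.mono fun _ ht => ht.trans hy.le

theorem const : LimsupLE l (fun _ => c) c :=
  of_eventually_le (Eventually.of_forall fun _ => le_rfl)

theorem mono (h : LimsupLE l g x) (hfg : f ≤ᶠ[l] g) : LimsupLE l f x :=
  fun z hz => ((h z hz).and hfg).mono fun _ ht => ht.2.trans ht.1

theorem add (hf : LimsupLE l f x) (hg : LimsupLE l g y) :
    LimsupLE l (fun t => f t + g t) (x + y) := by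
  intro z hz
  filter_upwards [hf (x + (z - x - y) / 2) (by linarith),
    hg (y + (z - x - y) / 2) (by linarith)] with t hft hgt
  linarith

theorem const_mul (h : LimsupLE l g x) (hc : 0 ≤ c) : LimsupLE l (fun t => c * g t) (c * x) := by
  intro z hz
  rcases hc.eq_or_lt with rfl | hc
  · exact Eventually.of_forall fun _ => by simpa using hz.le
  · filter_upwards [h (z / c) (by rwa [lt_div_iff₀' hc])] with t ht
    rwa [le_div_iff₀' hc] at ht

theorem mul (hf : LimsupLE l f x) (hg : LimsupLE l g y) (hg0 : ∀ᶠ t in l, 0 ≤ g t)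
    (hx : 0 ≤ x) : LimsupLE l (fun t => f t * g t) (x * y) := by
  intro z hz
  have hlim : Tendsto (fun ε => (x + ε) * (y + ε)) (𝓝[>] 0) (𝓝 (x * y)) := by
    have hcont : Continuous fun ε : ℝ => (x + ε) * (y + ε) := by fun_prop
    simpa using (hcont.tendsto 0).mono_left nhdsWithin_le_nhds
  obtain ⟨ε, hεz, hε⟩ := ((hlim.eventually_lt_const hz).and self_mem_nhdsWithin).exists
  filter_upwards [hf _ (lt_add_of_pos_right x hε), hg _ (lt_add_of_pos_right y hε), hg0]
    with t hft hgt hgt0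
  exact (mul_le_mul hft hgt hgt0 (by linarith)).trans hεz.le

theorem exists_eventually_le {p : ℝ → Prop} (hg : LimsupLE l g x) (hx : 0 ≤ x)
    (hp : ∀ᶠ z in 𝓝[Ici 0] x, p z) : ∃ z, 0 ≤ z ∧ p z ∧ ∀ᶠ t in l, g t ≤ z := by
  obtain ⟨z, hpz, hz⟩ :=
    ((hp.filter_mono (nhdsWithin_mono x (Ioi_subset_Ici hx))).and self_mem_nhdsWithin).exists
  exact ⟨z, hx.trans (le_of_lt hz), hpz, hg z hz⟩

end LimsupLE

namespace LiminfGE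

theorem const : LiminfGE l (fun _ => c) c :=
  fun _ hy => Eventually.of_forall fun _ => hy.le

theorem mono (h : LiminfGE l g x) (hgf : g ≤ᶠ[l] f) : LiminfGE l f x :=
  fun z hz => ((h z hz).and hgf).mono fun _ ht => ht.1.trans ht.2

theorem add (hf : LiminfGE l f x) (hg : LiminfGE l g y) :
    LiminfGE l (fun t => f t + g t) (x + y) := by
  intro z hz
  filter_upwards [hf (x - (x + y - z) / 2) (by linarith),
    hg (y - (x + y - z) / 2) (by linarith)] with t hft hgt
  linarith

theorem const_mul (h : LiminfGE l g x) (hc : 0 ≤ c) : LiminfGE l (fun t => c * g t) (c * x) := by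
  intro z hz
  rcases hc.eq_or_lt with rfl | hc
  · exact Eventually.of_forall fun _ => by simpa using hz.le
  · filter_upwards [h (z / c) (by rwa [div_lt_iff₀' hc])] with t ht
    rwa [div_le_iff₀' hc] at ht

theorem mul (hf : LiminfGE l f x) (hg : LiminfGE l g y) (hf0 : ∀ᶠ t in l, 0 ≤ f t)
    (hg0 : ∀ᶠ t in l, 0 ≤ g t) (hx : 0 ≤ x) (hy : 0 ≤ y) :
    LiminfGE l (fun t => f t * g t) (x * y) := by
  intro z hz
  rcases lt_or_ge z 0 with hz0 | hz0
  · filter_upwards [hf0, hg0] with t hft0 hgt0 using hz0.le.trans (mul_nonneg hft0 hgt0)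
  replace hx : 0 < x := hx.lt_of_ne (by rintro rfl; rw [zero_mul] at hz; linarith)
  replace hy : 0 < y := hy.lt_of_ne (by rintro rfl; rw [mul_zero] at hz; linarith)
  have hlim : Tendsto (fun ε => (x - ε) * (y - ε)) (𝓝[>] 0) (𝓝 (x * y)) := by
    have hcont : Continuous fun ε : ℝ => (x - ε) * (y - ε) := by fun_prop
    simpa using (hcont.tendsto 0).mono_left nhdsWithin_le_nhds
  have hsmall : ∀ᶠ ε in 𝓝[>] (0:ℝ), ε < min x y :=
    nhdsWithin_le_nhds (Iio_mem_nhds (lt_min hx hy))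
  obtain ⟨ε, ⟨hεz, hεxy⟩, hε⟩ :=
    (((hlim.eventually_const_lt hz).and hsmall).and self_mem_nhdsWithin).exists
  have hεx := hεxy.trans_le (min_le_left x y)
  have hεy := hεxy.trans_le (min_le_right x y)
  filter_upwards [hf _ (sub_lt_self x hε), hg _ (sub_lt_self y hε)] with t hft hgt
  exact hεz.le.trans (mul_le_mul hft hgt (by linarith) (by linarith))

theorem exists_eventually_le {p : ℝ → Prop} (hg : LiminfGE l g x) (hx : 0 ≤ x)
    (hg0 : ∀ᶠ t in l, 0 ≤ g t) (hp : ∀ᶠ z in 𝓝[Ici 0] x, p z) :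
    ∃ z, 0 ≤ z ∧ p z ∧ ∀ᶠ t in l, z ≤ g t := by
  rcases hx.eq_or_lt with rfl | hx
  · exact ⟨0, le_rfl, hp.self_of_nhdsWithin self_mem_Ici, hg0⟩
  · have hlt : Ici 0 ∈ 𝓝[<] x := mem_of_superset (Ioo_mem_nhdsLT hx) fun z hz => le_of_lt hz.1
    obtain ⟨z, hpz, hz⟩ := ((hp.filter_mono (nhdsWithin_le_of_mem hlt)).and
      (Ioo_mem_nhdsLT hx)).exists
    exact ⟨z, le_of_lt hz.1, hpz, hg z hz.2⟩

end LiminfGE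

section Composition

variable {φ : ℝ → ℝ}

theorem AntitoneOn.limsupLE_comp (hφ : AntitoneOn φ (Ici 0))
    (hφc : ContinuousWithinAt φ (Ici 0) x) (hx : 0 ≤ x) (hg0 : ∀ᶠ t in l, 0 ≤ g t)
    (hg : LiminfGE l g x) : LimsupLE l (fun t => φ (g t)) (φ x) := by
  intro y hy
  obtain ⟨z, hz0, hzy, hgz⟩ := hg.exists_eventually_le hx hg0 (hφc.eventually_lt_const hy)
  filter_upwards [hgz, hg0] with t hzt ht0 using (hφ hz0 ht0 hzt).trans hzy.le

theorem AntitoneOn.liminfGE_comp (hφ : AntitoneOn φ (Ici 0))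
    (hφc : ContinuousWithinAt φ (Ici 0) x) (hx : 0 ≤ x) (hg0 : ∀ᶠ t in l, 0 ≤ g t)
    (hg : LimsupLE l g x) : LiminfGE l (fun t => φ (g t)) (φ x) := by
  intro y hy
  obtain ⟨z, hz0, hzy, hgz⟩ := hg.exists_eventually_le hx (hφc.eventually_const_lt hy)
  filter_upwards [hgz, hg0] with t hzt ht0 using hzy.le.trans (hφ ht0 hz0 hzt)

theorem MonotoneOn.limsupLE_comp (hφ : MonotoneOn φ (Ici 0))
    (hφc : ContinuousWithinAt φ (Ici 0) x) (hx : 0 ≤ x) (hg0 : ∀ᶠ t in l, 0 ≤ g t)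
    (hg : LimsupLE l g x) : LimsupLE l (fun t => φ (g t)) (φ x) := by
  intro y hy
  obtain ⟨z, hz0, hzy, hgz⟩ := hg.exists_eventually_le hx (hφc.eventually_lt_const hy)
  filter_upwards [hgz, hg0] with t hzt ht0 using (hφ ht0 hz0 hzt).trans hzy.le

theorem MonotoneOn.liminfGE_comp (hφ : MonotoneOn φ (Ici 0))
    (hφc : ContinuousWithinAt φ (Ici 0) x) (hx : 0 ≤ x) (hg0 : ∀ᶠ t in l, 0 ≤ g t)
    (hg : LiminfGE l g x) : LiminfGE l (fun t => φ (g t)) (φ x) := by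
  intro y hy
  obtain ⟨z, hz0, hzy, hgz⟩ := hg.exists_eventually_le hx hg0 (hφc.eventually_const_lt hy)
  filter_upwards [hgz, hg0] with t hzt ht0 using hzy.le.trans (hφ hz0 ht0 hzt)

end Composition

end Asymptotic

section Limits

variable {h f : ℝ → ℝ} {x : ℝ}

theorem limsupLE_toReal_elimsup (hfin : elimsup f ≠ ⊤) :
    LimsupLE atTop f (elimsup f).toReal := by
  intro y hy
  have hlt : elimsup f < ENNReal.ofReal y := (ENNReal.lt_ofReal_iff_toReal_lt hfin).2 hy
  filter_upwards [eventually_lt_of_limsup_lt hlt] with t ht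
  exact (ENNReal.ofReal_lt_ofReal_iff'.1 ht).1.le

theorem liminfGE_toReal_eliminf (hf0 : ∀ t, 0 ≤ f t) (hfin : eliminf f ≠ ⊤) :
    LiminfGE atTop f (eliminf f).toReal := by
  intro y hy
  rcases lt_or_ge y 0 with hy0 | hy0
  · exact Eventually.of_forall fun t => hy0.le.trans (hf0 t)
  have hlt : ENNReal.ofReal y < eliminf f := (ENNReal.ofReal_lt_iff_lt_toReal hy0 hfin).2 hy
  filter_upwards [eventually_lt_of_lt_liminf hlt] with t ht
  exact (ENNReal.ofReal_lt_ofReal_iff'.1 ht).1.le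

theorem LimsupLE.elimsup_le (h : LimsupLE atTop f x) : elimsup f ≤ ENNReal.ofReal x :=
  ge_of_tendsto ((ENNReal.continuous_ofReal.tendsto x).mono_left (nhdsWithin_le_nhds (s := Ioi x)))
    (eventually_nhdsWithin_of_forall fun y hy =>
      limsup_le_of_le (by isBoundedDefault) ((h y hy).mono fun _ ht => ENNReal.ofReal_le_ofReal ht))

theorem LiminfGE.le_toReal_eliminf (h : LiminfGE atTop f x) (hfin : eliminf f ≠ ⊤) :
    x ≤ (eliminf f).toReal :=
  le_of_forall_lt_imp_le_of_dense fun y hy => (ENNReal.ofReal_le_iff_le_toReal hfin).1 <|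
    le_liminf_of_le (by isBoundedDefault) ((h y hy).mono fun _ ht => ENNReal.ofReal_le_ofReal ht)

theorem LimsupLE.conv (hk : KernelL1 h) (hf : Continuous f) (hlim : LimsupLE atTop f x)
    (hx : 0 ≤ x) : LimsupLE atTop (convK h f) (l1 h * x) := by
  intro y hy
  have hnear : ∀ᶠ S in 𝓝[>] x, l1 h * S < y :=
    ((continuous_const_mul (l1 h)).tendsto x).mono_left nhdsWithin_le_nhds |>.eventually_lt_const hy
  obtain ⟨S, hSy, hxS⟩ := (hnear.and self_mem_nhdsWithin).exists
  obtain ⟨T, hT⟩ := eventually_atTop.1 (hlim S hxS)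
  obtain ⟨B, hB⟩ := (isCompact_Icc (a := 0) (b := max T 0)).bddAbove_image hf.continuousOn
  have hwin := (tendsto_integral_window hk (max T 0)).const_mul B
  rw [mul_zero] at hwin
  filter_upwards [hwin.eventually_lt_const (sub_pos.2 hSy), eventually_ge_atTop (max T 0)]
    with t hwin_t ht
  have := conv_le_of_le hk hf (le_max_right T 0) ht (hx.trans (le_of_lt hxS))
    (fun u hu => hB ⟨u, hu, rfl⟩) fun u hu => hT u ((le_max_left T 0).trans hu.1)
  linarith

theorem LiminfGE.conv (hk : KernelL1 h) (hf : Continuous f) (hf0 : ∀ u, 0 ≤ f u)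
    (hlim : LiminfGE atTop f x) : LiminfGE atTop (convK h f) (l1 h * x) := by
  intro y hy
  have hnear : ∀ᶠ r in 𝓝[<] x, y < l1 h * r :=
    ((continuous_const_mul (l1 h)).tendsto x).mono_left nhdsWithin_le_nhds |>.eventually_const_lt hy
  obtain ⟨r, hyr, hrx⟩ := (hnear.and self_mem_nhdsWithin).exists
  obtain ⟨T, hT⟩ := eventually_atTop.1 (hlim r hrx)
  have hker := (tendsto_integral_sub_l1 hk (max T 0)).const_mul r
  filter_upwards [hker.eventually_const_lt (show y < r * l1 h by linarith), eventually_ge_atTop (max T 0)]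
    with t hker_t ht
  exact hker_t.le.trans
    (le_conv_of_le hk hf hf0 (le_max_right T 0) ht fun u hu => hT u ((le_max_left T 0).trans hu.1))

end Limits

section Renewal

variable {h f a b : ℝ → ℝ} {A β c C : ℝ}

theorem exists_bound_of_le_renewal (hk : KernelL1 h) (hf : Continuous f) (hf0 : ∀ t, 0 ≤ f t)
    {T : ℝ} (hc : 0 ≤ c) (hq : c * l1 h < 1) (hT : 0 ≤ T)
    (hle : ∀ t, T ≤ t → f t ≤ C + c * convK h f t) : ∃ B, ∀ t, 0 ≤ t → f t ≤ B := by
  obtain ⟨t₁, -, ht₁⟩ := isCompact_Icc.exists_isMaxOn (nonempty_Icc.2 hT) hf.continuousOn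
  refine ⟨max (f t₁) (C / (1 - c * l1 h)), fun t ht => ?_⟩
  obtain ⟨t₀, ht₀, hmax⟩ := isCompact_Icc.exists_isMaxOn
    (nonempty_Icc.2 (ht.trans (le_max_left t T))) hf.continuousOn
  have hft : f t ≤ f t₀ := hmax ⟨ht, le_max_left t T⟩
  rcases le_or_gt t₀ T with hT₀ | hT₀
  · exact hft.trans (le_max_of_le_left (ht₁ ⟨ht₀.1, hT₀⟩))
  have hconv : convK h f t₀ ≤ f t₀ * l1 h :=
    conv_le_mul hk hf ht₀.1 (hf0 t₀) fun u hu => hmax ⟨hu.1, hu.2.trans ht₀.2⟩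
  have hbound : f t₀ ≤ C / (1 - c * l1 h) := by
    rw [le_div_iff₀ (by linarith)]
    nlinarith [hle t₀ hT₀.le, mul_le_mul_of_nonneg_left hconv hc]
  exact hft.trans (le_max_of_le_right hbound)

theorem elimsup_ne_top_of_le_renewal (hk : KernelL1 h) (hf : Continuous f) (hf0 : ∀ t, 0 ≤ f t)
    (hc : 0 ≤ c) (hq : c * l1 h < 1) (hle : ∀ᶠ t in atTop, f t ≤ C + c * convK h f t) :
    elimsup f ≠ ⊤ := by
  obtain ⟨T, hT⟩ := eventually_atTop.1 hle
  obtain ⟨B, hB⟩ := exists_bound_of_le_renewal hk hf hf0 hc hq (le_max_right T 0)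
    fun t ht => hT t ((le_max_left T 0).trans ht)
  exact ne_top_of_le_ne_top ENNReal.ofReal_ne_top
    (LimsupLE.of_eventually_le ((eventually_ge_atTop 0).mono hB)).elimsup_le

theorem toReal_elimsup_le_of_le_renewal (hk : KernelL1 h) (hf : Continuous f)
    (hf0 : ∀ t, 0 ≤ f t) (ha : LimsupLE atTop a A) (hb : LimsupLE atTop b β) (hA : 0 ≤ A) (hβ : 0 ≤ β) (hq : β * l1 h < 1)
    (hle : ∀ᶠ t in atTop, f t ≤ a t + b t * convK h f t) :
    elimsup f ≠ ⊤ ∧ (elimsup f).toReal ≤ A / (1 - β * l1 h) := by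
  have hconv0 : ∀ᶠ t in atTop, 0 ≤ convK h f t :=
    (eventually_ge_atTop 0).mono fun _ => conv_nonneg hk hf0
  have hnear : ∀ᶠ β' in 𝓝[>] β, β' * l1 h < 1 :=
    ((continuous_mul_const (l1 h)).tendsto β).mono_left nhdsWithin_le_nhds |>.eventually_lt_const hq
  obtain ⟨β', hq', hββ'⟩ := (hnear.and self_mem_nhdsWithin).exists
  have hfin : elimsup f ≠ ⊤ := by
    refine elimsup_ne_top_of_le_renewal hk hf hf0 (C := A + 1) (hβ.trans (le_of_lt hββ')) hq' ?_
    filter_upwards [hle, ha (A + 1) (lt_add_one A), hb β' hββ', hconv0] with t hft hat hbt hct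
    nlinarith [mul_le_mul_of_nonneg_right hbt hct]
  set M := (elimsup f).toReal
  have hM : LimsupLE atTop f (A + β * (l1 h * M)) :=
    (ha.add (hb.mul ((limsupLE_toReal_elimsup hfin).conv hk hf ENNReal.toReal_nonneg) hconv0
      hβ)).mono hle
  have hMM := hM.elimsup_le
  refine ⟨hfin, (le_div_iff₀ (by linarith)).2 ?_⟩
  nlinarith [ENNReal.toReal_le_of_le_ofReal (by have := l1_nonneg hk; positivity) hMM]

theorem div_le_toReal_eliminf_of_renewal_le (hk : KernelL1 h) (hf : Continuous f)
    (hf0 : ∀ t, 0 ≤ f t) (ha : LiminfGE atTop a A) (hb : LiminfGE atTop b β)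
    (hb0 : ∀ᶠ t in atTop, 0 ≤ b t) (hβ : 0 ≤ β) (hq : β * l1 h < 1) (hfin : eliminf f ≠ ⊤)
    (hle : ∀ᶠ t in atTop, a t + b t * convK h f t ≤ f t) :
    A / (1 - β * l1 h) ≤ (eliminf f).toReal := by
  have hconv0 : ∀ᶠ t in atTop, 0 ≤ convK h f t :=
    (eventually_ge_atTop 0).mono fun _ => conv_nonneg hk hf0
  have hm := (ha.add (hb.mul ((liminfGE_toReal_eliminf hf0 hfin).conv hk hf hf0) hb0 hconv0 hβ
    (mul_nonneg (l1_nonneg hk) ENNReal.toReal_nonneg))).mono hle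
  rw [div_le_iff₀ (by linarith)]
  nlinarith [hm.le_toReal_eliminf hfin]

end Renewal

section FixedPointMap

variable {φ ψ : ℝ → ℝ} {μ κ₁ κ₂ κ₃ κ₄ x y : ℝ}

theorem continuousOn_Ici_of_lipschitz
    (hφ : ∃ K, 0 ≤ K ∧ ∀ x y, 0 ≤ x → 0 ≤ y → |φ x - φ y| ≤ K * |x - y|) :
    ContinuousOn φ (Ici 0) := by
  obtain ⟨K, hK, hφ⟩ := hφ
  refine (LipschitzOnWith.of_dist_le_mul (K := K.toNNReal) fun x hx y hy => ?_).continuousOn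
  rw [Real.dist_eq, Real.dist_eq, Real.coe_toNNReal K hK]
  exact hφ x y hx hy

theorem mem_Idom_of_le (hφ : AntitoneOn φ (Ici 0)) (hκ₁ : 0 ≤ κ₁) (hκ₂ : 0 ≤ κ₂)
    (hx : x ∈ Idom κ₁ κ₂ φ) (hxy : x ≤ y) : y ∈ Idom κ₁ κ₂ φ := by
  have hx₂ : 0 ≤ κ₂ * x := mul_nonneg hκ₂ hx.1
  refine ⟨hx.1.trans hxy, lt_of_le_of_lt ?_ hx.2⟩
  exact mul_le_mul_of_nonneg_left
    (hφ hx₂ (hx₂.trans (mul_le_mul_of_nonneg_left hxy hκ₂)) (mul_le_mul_of_nonneg_left hxy hκ₂)) hκ₁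

theorem Psi1_nonneg (hμ : 0 ≤ μ) (hφ0 : ∀ z, 0 ≤ z → 0 ≤ φ z) (hκ₂ : 0 ≤ κ₂)
    (hx : x ∈ Idom κ₁ κ₂ φ) : 0 ≤ Psi1 μ κ₁ κ₂ φ x :=
  div_nonneg (mul_nonneg hμ (hφ0 _ (mul_nonneg hκ₂ hx.1))) (by linarith [hx.2])

theorem Psi1_antitoneOn (hμ : 0 ≤ μ) (hφ : AntitoneOn φ (Ici 0)) (hφ0 : ∀ z, 0 ≤ z → 0 ≤ φ z)
    (hκ₁ : 0 ≤ κ₁) (hκ₂ : 0 ≤ κ₂) : AntitoneOn (Psi1 μ κ₁ κ₂ φ) (Idom κ₁ κ₂ φ) := by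
  intro x hx y hy hxy
  have hx₂ : 0 ≤ κ₂ * x := mul_nonneg hκ₂ hx.1
  have hφxy : φ (κ₂ * y) ≤ φ (κ₂ * x) :=
    hφ hx₂ (mul_nonneg hκ₂ hy.1) (mul_le_mul_of_nonneg_left hxy hκ₂)
  exact div_le_div₀ (mul_nonneg hμ (hφ0 _ hx₂)) (mul_le_mul_of_nonneg_left hφxy hμ)
    (by linarith [hx.2]) (by linarith [mul_le_mul_of_nonneg_left hφxy hκ₁])

theorem Psi2_monotoneOn (hψ : MonotoneOn ψ (Ici 0)) (hκ₃ : κ₃ < 1) (hκ₄ : 0 ≤ κ₄) :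
    MonotoneOn (Psi2 μ κ₃ κ₄ ψ) (Ici 0) := fun x hx y hy hxy =>
  div_le_div_of_nonneg_right (by
    linarith [hψ (mul_nonneg hκ₄ hx) (mul_nonneg hκ₄ hy) (mul_le_mul_of_nonneg_left hxy hκ₄)])
    (by linarith)

theorem div_le_Psi2 (hψ0 : ∀ z, 0 ≤ z → 0 ≤ ψ z) (hκ₃ : κ₃ < 1) (hκ₄ : 0 ≤ κ₄) (hx : 0 ≤ x) :
    μ / (1 - κ₃) ≤ Psi2 μ κ₃ κ₄ ψ x :=
  div_le_div_of_nonneg_right (le_add_of_nonneg_right (hψ0 _ (mul_nonneg hκ₄ hx)))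
    (by linarith)

theorem PhiMap_antitoneOn {μA μB : ℝ} (hφ : AntitoneOn φ (Ici 0)) (hφ0 : ∀ z, 0 ≤ z → 0 ≤ φ z)
    (hψ : MonotoneOn ψ (Ici 0)) (hμA : 0 ≤ μA) (hκ₁ : 0 ≤ κ₁) (hκ₂ : 0 ≤ κ₂) (hκ₃ : κ₃ < 1) (hκ₄ : 0 ≤ κ₄) :
    AntitoneOn (PhiMap μA μB κ₁ κ₂ κ₃ κ₄ φ ψ) (Idom κ₁ κ₂ φ) :=
  (Psi2_monotoneOn hψ hκ₃ hκ₄).comp_AntitoneOn (Psi1_antitoneOn hμA hφ hφ0 hκ₁ hκ₂)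
    fun _ hx => Psi1_nonneg hμA hφ0 hκ₂ hx

theorem AntitoneOn.fixedPoint_mem_Icc {s : Set ℝ} {F : ℝ → ℝ} {u v ℓ : ℝ} (hF : AntitoneOn F s)
    (hu : u ∈ s) (hv : v ∈ s) (hℓ : ℓ ∈ s) (hfix : F ℓ = ℓ) (huv : u ≤ v) (hFv : F v ≤ u)
    (hFu : v ≤ F u) : ℓ ∈ Icc u v := by
  constructor
  · by_contra! hℓu
    linarith [hF hℓ hu hℓu.le]
  · by_contra! hvℓ
    linarith [hF hv hℓ hvℓ.le]

end FixedPointMap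

section MeanField

variable {h h' f g φ ψ : ℝ → ℝ} {μ c c' x : ℝ}

theorem toReal_elimsup_le_Psi1 (hk : KernelL1 h) (hk' : KernelL1 h') (hφ : InhibOK φ)
    (hf : Continuous f) (hf0 : ∀ t, 0 ≤ f t) (hg : Continuous g) (hg0 : ∀ t, 0 ≤ g t)
    (hμ : 0 ≤ μ) (hc : 0 ≤ c) (hc' : 0 ≤ c')
    (heq : ∀ t, 0 ≤ t → f t = (μ + c * convK h f t) * φ (c' * convK h' g t))
    (hg_inf : LiminfGE atTop g x) (hx : x ∈ Idom (c * l1 h) (c' * l1 h') φ) :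
    elimsup f ≠ ⊤ ∧ (elimsup f).toReal ≤ Psi1 μ (c * l1 h) (c' * l1 h') φ x := by
  obtain ⟨hlip, hanti, -, hbd, -⟩ := hφ
  have hx' : 0 ≤ c' * l1 h' * x := mul_nonneg (mul_nonneg hc' (l1_nonneg hk')) hx.1
  have hs0 : ∀ᶠ t in atTop, 0 ≤ c' * convK h' g t :=
    (eventually_ge_atTop 0).mono fun _ ht => mul_nonneg hc' (conv_nonneg hk' hg0 ht)
  have hs : LiminfGE atTop (fun t => c' * convK h' g t) (c' * l1 h' * x) := by
    rw [mul_assoc]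
    exact (hg_inf.conv hk' hg hg0).const_mul hc'
  have hP := hanti.limsupLE_comp (continuousOn_Ici_of_lipschitz hlip _ hx') hx' hs0 hs
  have hP0 := (hbd _ hx').1
  have hbound := toReal_elimsup_le_of_le_renewal hk hf hf0 (hP.const_mul hμ) (hP.const_mul hc)
    (mul_nonneg hμ hP0) (mul_nonneg hc hP0) (by linarith [hx.2])
    ((eventually_ge_atTop 0).mono fun t ht => ((heq t ht).trans (by ring)).le)
  rwa [Psi1, mul_right_comm c (l1 h)]

theorem Psi1_le_toReal_eliminf (hk : KernelL1 h) (hk' : KernelL1 h') (hφ : InhibOK φ)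
    (hf : Continuous f) (hf0 : ∀ t, 0 ≤ f t) (hg : Continuous g) (hg0 : ∀ t, 0 ≤ g t)
    (hμ : 0 ≤ μ) (hc : 0 ≤ c) (hc' : 0 ≤ c')
    (heq : ∀ t, 0 ≤ t → f t = (μ + c * convK h f t) * φ (c' * convK h' g t))
    (hg_sup : LimsupLE atTop g x) (hx : x ∈ Idom (c * l1 h) (c' * l1 h') φ)
    (hfin : eliminf f ≠ ⊤) :
    Psi1 μ (c * l1 h) (c' * l1 h') φ x ≤ (eliminf f).toReal := by
  obtain ⟨hlip, hanti, -, hbd, -⟩ := hφ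
  have hx' : 0 ≤ c' * l1 h' * x := mul_nonneg (mul_nonneg hc' (l1_nonneg hk')) hx.1
  have hs0 : ∀ᶠ t in atTop, 0 ≤ c' * convK h' g t :=
    (eventually_ge_atTop 0).mono fun _ ht => mul_nonneg hc' (conv_nonneg hk' hg0 ht)
  have hs : LimsupLE atTop (fun t => c' * convK h' g t) (c' * l1 h' * x) := by
    rw [mul_assoc]
    exact (hg_sup.conv hk' hg hx.1).const_mul hc'
  have hp := hanti.liminfGE_comp (continuousOn_Ici_of_lipschitz hlip _ hx') hx' hs0 hs
  have hbound := div_le_toReal_eliminf_of_renewal_le hk hf hf0 (hp.const_mul hμ) (hp.const_mul hc)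
    (hs0.mono fun _ ht => mul_nonneg hc (hbd _ ht).1) (mul_nonneg hc (hbd _ hx').1)
    (by linarith [hx.2]) hfin
    ((eventually_ge_atTop 0).mono fun t ht => ((heq t ht).trans (by ring)).ge)
  rwa [Psi1, mul_right_comm c (l1 h)]

theorem toReal_elimsup_le_Psi2 (hk : KernelL1 h) (hk' : KernelL1 h') (hψ : FeedOK ψ)
    (hf : Continuous f) (hf0 : ∀ t, 0 ≤ f t) (hg : Continuous g) (hg0 : ∀ t, 0 ≤ g t)
    (hμ : 0 ≤ μ) (hc : 0 ≤ c) (hc' : 0 ≤ c')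
    (heq : ∀ t, 0 ≤ t → f t = μ + c * convK h f t + ψ (c' * convK h' g t))
    (hg_sup : LimsupLE atTop g x) (hx : 0 ≤ x) (hq : c * l1 h < 1) :
    elimsup f ≠ ⊤ ∧ (elimsup f).toReal ≤ Psi2 μ (c * l1 h) (c' * l1 h') ψ x := by
  obtain ⟨hlip, hmono, -, hnn, -⟩ := hψ
  have hx' : 0 ≤ c' * l1 h' * x := mul_nonneg (mul_nonneg hc' (l1_nonneg hk')) hx
  have hs0 : ∀ᶠ t in atTop, 0 ≤ c' * convK h' g t :=
    (eventually_ge_atTop 0).mono fun _ ht => mul_nonneg hc' (conv_nonneg hk' hg0 ht)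
  have hs : LimsupLE atTop (fun t => c' * convK h' g t) (c' * l1 h' * x) := by
    rw [mul_assoc]
    exact (hg_sup.conv hk' hg hx).const_mul hc'
  have hP := hmono.limsupLE_comp (continuousOn_Ici_of_lipschitz hlip _ hx') hx' hs0 hs
  have hbound := toReal_elimsup_le_of_le_renewal hk hf hf0 ((LimsupLE.const (c := μ)).add hP)
    (LimsupLE.const (c := c))
    (add_nonneg hμ (hnn _ hx')) hc hq
    ((eventually_ge_atTop 0).mono fun t ht => ((heq t ht).trans (by ring)).le)
  rwa [Psi2]

theorem Psi2_le_toReal_eliminf (hk : KernelL1 h) (hk' : KernelL1 h') (hψ : FeedOK ψ)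
    (hf : Continuous f) (hf0 : ∀ t, 0 ≤ f t) (hg : Continuous g) (hg0 : ∀ t, 0 ≤ g t)
    (hc : 0 ≤ c) (hc' : 0 ≤ c')
    (heq : ∀ t, 0 ≤ t → f t = μ + c * convK h f t + ψ (c' * convK h' g t))
    (hg_inf : LiminfGE atTop g x) (hx : 0 ≤ x) (hq : c * l1 h < 1) (hfin : eliminf f ≠ ⊤) :
    Psi2 μ (c * l1 h) (c' * l1 h') ψ x ≤ (eliminf f).toReal := by
  obtain ⟨hlip, hmono, -, -, -⟩ := hψ
  have hx' : 0 ≤ c' * l1 h' * x := mul_nonneg (mul_nonneg hc' (l1_nonneg hk')) hx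
  have hs0 : ∀ᶠ t in atTop, 0 ≤ c' * convK h' g t :=
    (eventually_ge_atTop 0).mono fun _ ht => mul_nonneg hc' (conv_nonneg hk' hg0 ht)
  have hs : LiminfGE atTop (fun t => c' * convK h' g t) (c' * l1 h' * x) := by
    rw [mul_assoc]
    exact (hg_inf.conv hk' hg hg0).const_mul hc'
  have hp := hmono.liminfGE_comp (continuousOn_Ici_of_lipschitz hlip _ hx') hx' hs0 hs
  have hbound := div_le_toReal_eliminf_of_renewal_le hk hf hf0 ((LiminfGE.const (c := μ)).add hp)
    (LiminfGE.const (c := c)) (Eventually.of_forall fun _ => hc) hc hq hfin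
    ((eventually_ge_atTop 0).mono fun t ht => ((heq t ht).trans (by ring)).ge)
  rwa [Psi2]

end MeanField

theorem stmt11_general
    (α : ℝ) (hα : α ∈ Set.Ioo (0:ℝ) 1)
    (h₁ h₂ h₃ h₄ : ℝ → ℝ)
    (hh₁ : KernelOK h₁) (hh₂ : KernelOK h₂) (hh₃ : KernelOK h₃) (hh₄ : KernelOK h₄)
    (κ₁ κ₂ κ₃ κ₄ : ℝ)
    (hκ₁ : κ₁ = α * l1 h₁) (hκ₂ : κ₂ = (1 - α) * l1 h₂)
    (hκ₃ : κ₃ = (1 - α) * l1 h₃) (hκ₄ : κ₄ = α * l1 h₄)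
    (ΦBA ΦAB : ℝ → ℝ) (hBA : InhibOK ΦBA) (hAB : FeedOK ΦAB)
    (μA μB : ℝ) (hμA : 0 < μA) (hμB : 0 ≤ μB)
    (hk3 : κ₃ < 1)
    (ℓ : ℝ) (hℓmem : ℓ ∈ Idom κ₁ κ₂ ΦBA)
    (hℓfix : PhiMap μA μB κ₁ κ₂ κ₃ κ₄ ΦBA ΦAB ℓ = ℓ)
    (lA lB : ℝ → ℝ) (hsys : IsLinSys α h₁ h₂ h₃ h₄ ΦBA ΦAB μA μB lA lB)
    (hIn : eliminf lB < ⊤ ∧ (eliminf lB).toReal ∈ Idom κ₁ κ₂ ΦBA) :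
    elimsup lB < ⊤ ∧
    ((eliminf lB).toReal, (elimsup lB).toReal) ∈
      UPhi μA μB κ₁ κ₂ κ₃ κ₄ ΦBA ΦAB ℓ ∧
    PhiMap μA μB κ₁ κ₂ κ₃ κ₄ ΦBA ΦAB (elimsup lB).toReal ≤ (eliminf lB).toReal ∧
    (eliminf lB).toReal ≤ ℓ ∧ ℓ ≤ (elimsup lB).toReal ∧
    (elimsup lB).toReal ≤ PhiMap μA μB κ₁ κ₂ κ₃ κ₄ ΦBA ΦAB (eliminf lB).toReal ∧
    μB / (1 - κ₃) ≤ (eliminf lB).toReal := by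
  obtain ⟨hcA, hcB, hA0, hB0, heqA, heqB⟩ := hsys
  obtain ⟨hm_fin, hm_dom⟩ := hIn
  subst hκ₁ hκ₂ hκ₃ hκ₄
  have hα0 : 0 ≤ α := hα.1.le
  have h1α : 0 ≤ 1 - α := by linarith [hα.2]
  have hκ₁ : 0 ≤ α * l1 h₁ := mul_nonneg hα0 (l1_nonneg hh₁.1)
  have hκ₂ : 0 ≤ (1 - α) * l1 h₂ := mul_nonneg h1α (l1_nonneg hh₂.1)
  have hκ₄ : 0 ≤ α * l1 h₄ := mul_nonneg hα0 (l1_nonneg hh₄.1)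
  have hBA0 : ∀ z, 0 ≤ z → 0 ≤ ΦBA z := fun z hz => (hBA.2.2.2.1 z hz).1
  set m := (eliminf lB).toReal
  set M := (elimsup lB).toReal
  obtain ⟨hMA_fin, hMA⟩ := toReal_elimsup_le_Psi1 hh₁.1 hh₂.1 hBA hcA hA0 hcB hB0 hμA.le hα0 h1α
    heqA (liminfGE_toReal_eliminf hB0 hm_fin.ne) hm_dom
  have hmA_fin : eliminf lA ≠ ⊤ := ne_top_of_le_ne_top hMA_fin liminf_le_limsup
  obtain ⟨hM_fin, hM⟩ := toReal_elimsup_le_Psi2 hh₃.1 hh₄.1 hAB hcB hB0 hcA hA0 hμB h1α hα0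
    heqB (limsupLE_toReal_elimsup hMA_fin) ENNReal.toReal_nonneg hk3
  have hmM : m ≤ M := ENNReal.toReal_mono hM_fin liminf_le_limsup
  have hM_dom := mem_Idom_of_le hBA.2.1 hκ₁ hκ₂ hm_dom hmM
  have hmA := Psi1_le_toReal_eliminf hh₁.1 hh₂.1 hBA hcA hA0 hcB hB0 hμA.le hα0 h1α heqA
    (limsupLE_toReal_elimsup hM_fin) hM_dom hmA_fin
  have hm := Psi2_le_toReal_eliminf hh₃.1 hh₄.1 hAB hcB hB0 hcA hA0 h1α hα0 heqB
    (liminfGE_toReal_eliminf hA0 hmA_fin) ENNReal.toReal_nonneg hk3 hm_fin.ne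
  have hΨ₂ := Psi2_monotoneOn (μ := μB) hAB.2.1 hk3 hκ₄
  have hPhi_M : PhiMap μA μB _ _ _ _ ΦBA ΦAB M ≤ m :=
    (hΨ₂ (Psi1_nonneg hμA.le hBA0 hκ₂ hM_dom) ENNReal.toReal_nonneg hmA).trans hm
  have hM_Phi : M ≤ PhiMap μA μB _ _ _ _ ΦBA ΦAB m :=
    hM.trans (hΨ₂ ENNReal.toReal_nonneg (Psi1_nonneg hμA.le hBA0 hκ₂ hm_dom) hMA)
  have hμB_m := (div_le_Psi2 hAB.2.2.2.1 hk3 hκ₄ ENNReal.toReal_nonneg).trans hm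
  obtain ⟨hmℓ, hℓM⟩ := (PhiMap_antitoneOn hBA.2.1 hBA0 hAB.2.1 hμA.le hκ₁ hκ₂ hk3
    hκ₄).fixedPoint_mem_Icc hm_dom hM_dom hℓmem hℓfix hmM hPhi_M hM_Phi
  exact ⟨hM_fin.lt_top, ⟨hm_dom, hM_dom, hPhi_M, hmℓ, hℓM, hM_Phi, hμB_m⟩,
    hPhi_M, hmℓ, hℓM, hM_Phi, hμB_m⟩

/-- If `liminf λ^B ∈ I_{κ₁,κ₂}` then `(liminf λ^B, limsup λ^B) ∈ U_Φ`; in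
particular `limsup λ^B < ∞` and the chain of inequalities holds. -/
theorem stmt11
    (α : ℝ) (hα : α ∈ Set.Ioo (0:ℝ) 1)
    (h₁ h₂ h₃ h₄ : ℝ → ℝ)
    (hh₁ : KernelOK h₁) (hh₂ : KernelOK h₂) (hh₃ : KernelOK h₃) (hh₄ : KernelOK h₄)
    (κ₁ κ₂ κ₃ κ₄ : ℝ)
    (hκ₁ : κ₁ = α * l1 h₁) (hκ₂ : κ₂ = (1 - α) * l1 h₂)
    (hκ₃ : κ₃ = (1 - α) * l1 h₃) (hκ₄ : κ₄ = α * l1 h₄)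
    (ΦBA ΦAB : ℝ → ℝ) (hBA : InhibOK ΦBA) (hAB : FeedOK ΦAB)
    (μA μB : ℝ) (hμA : 0 < μA) (hμB : 0 ≤ μB)
    (hk2 : 0 < κ₂) (hk4 : 0 < κ₄) (hk3 : κ₃ < 1)
    (ℓ : ℝ) (hℓmem : ℓ ∈ Idom κ₁ κ₂ ΦBA)
    (hℓfix : PhiMap μA μB κ₁ κ₂ κ₃ κ₄ ΦBA ΦAB ℓ = ℓ)
    (hℓuniq : ∀ x ∈ Idom κ₁ κ₂ ΦBA,
      PhiMap μA μB κ₁ κ₂ κ₃ κ₄ ΦBA ΦAB x = x → x = ℓ)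
    (lA lB : ℝ → ℝ) (hsys : IsLinSys α h₁ h₂ h₃ h₄ ΦBA ΦAB μA μB lA lB)
    (hIn : eliminf lB < ⊤ ∧ (eliminf lB).toReal ∈ Idom κ₁ κ₂ ΦBA) :
    elimsup lB < ⊤ ∧
    ((eliminf lB).toReal, (elimsup lB).toReal) ∈
      UPhi μA μB κ₁ κ₂ κ₃ κ₄ ΦBA ΦAB ℓ ∧
    PhiMap μA μB κ₁ κ₂ κ₃ κ₄ ΦBA ΦAB (elimsup lB).toReal ≤ (eliminf lB).toReal ∧
    (eliminf lB).toReal ≤ ℓ ∧ ℓ ≤ (elimsup lB).toReal ∧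
    (elimsup lB).toReal ≤ PhiMap μA μB κ₁ κ₂ κ₃ κ₄ ΦBA ΦAB (eliminf lB).toReal ∧
    μB / (1 - κ₃) ≤ (eliminf lB).toReal :=
  stmt11_general α hα h₁ h₂ h₃ h₄ hh₁ hh₂ hh₃ hh₄ κ₁ κ₂ κ₃ κ₄ hκ₁ hκ₂ hκ₃ hκ₄ ΦBA ΦAB hBA hAB μA μB
    hμA hμB hk3 ℓ hℓmem hℓfix lA lB hsys hIn
end

section
/- Suppose κ₃ < 1, κ₂ > 0, κ₄ > 0 and μ_A > 0, let ℓ be the unique fixed point of Φ in I_{κ₁,κ₂}, and suppose in addition that Φ is strictly decreasing on I_{κ₁,κ₂}. Let x* := inf I_{κ₁,κ₂} (with x* = 0 when κ₁ < 1). Then U_Φ = {(ℓ, ℓ)} if and only if u < Φ(Φ(u)) for every u in the open interval (max(x*, μ_B/(1−κ₃)), ℓ). -/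
open MeasureTheory Filter Topology Set
open scoped ENNReal

/-!
If `Φ (Φ u) ≤ u` for some `u` of the interval, then `(u, Φ u)` is a pair of `U_Φ` other than
`(ℓ, ℓ)`, since `Φ` is antitone and fixes `ℓ`. Conversely, a pair `(u, v) ∈ U_Φ` with `u < ℓ`
gives `Φ (Φ u) ≤ Φ v ≤ u`, and such a `u` lies in the open interval: `Φ` stays strictly above
`μ_B / (1 - κ₃)` on the upward closed set `I_{κ₁,κ₂}`, and by continuity of `Φ_{B→A}` no
positive point of `I_{κ₁,κ₂}` is its infimum.
-/

section AdmissiblePairs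

def admissiblePairs (f : ℝ → ℝ) (S : Set ℝ) (ℓ b : ℝ) : Set (ℝ × ℝ) :=
  {p : ℝ × ℝ | p.1 ∈ S ∧ p.2 ∈ S ∧ f p.2 ≤ p.1 ∧ p.1 ≤ ℓ ∧ ℓ ≤ p.2 ∧ p.2 ≤ f p.1 ∧ b ≤ p.1}

variable {f : ℝ → ℝ} {S : Set ℝ} {ℓ b : ℝ}

theorem forall_lt_apply_of_forall_le_apply (hS : IsUpperSet S) (hf : StrictAntiOn f S)
    (hb : ∀ y ∈ S, b ≤ f y) : ∀ y ∈ S, b < f y := fun y hy =>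
  have hy' : y + 1 ∈ S := hS (lt_add_one y).le hy
  (hb _ hy').trans_lt (hf hy hy' (lt_add_one y))

theorem mk_apply_mem_admissiblePairs (hS : IsUpperSet S) (hf : AntitoneOn f S)
    (hℓ : ℓ ∈ S) (hfℓ : f ℓ = ℓ) {u : ℝ} (hu : u ∈ S) (huℓ : u ≤ ℓ) (hbu : b ≤ u)
    (hffu : f (f u) ≤ u) : (u, f u) ∈ admissiblePairs f S ℓ b := by
  have hℓfu : ℓ ≤ f u := hfℓ ▸ hf hu hℓ huℓ
  exact ⟨hu, hS hℓfu hℓ, hffu, huℓ, hℓfu, le_rfl, hbu⟩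

theorem apply_apply_le_of_mem_admissiblePairs (hS : IsUpperSet S) (hf : AntitoneOn f S)
    (hℓ : ℓ ∈ S) {u v : ℝ} (h : (u, v) ∈ admissiblePairs f S ℓ b) : f (f u) ≤ u := by
  obtain ⟨-, hv, hfv, -, hℓv, hvfu, -⟩ := h
  exact (hf hv (hS (hℓv.trans hvfu) hℓ) hvfu).trans hfv

theorem admissiblePairs_eq_singleton_iff (hS : IsUpperSet S) (hf : AntitoneOn f S)
    (hℓ : ℓ ∈ S) (hfℓ : f ℓ = ℓ) (hb : ∀ y ∈ S, b < f y)
    (hinf : ∀ u ∈ S, b < u → sInf S < u) :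
    admissiblePairs f S ℓ b = {(ℓ, ℓ)} ↔
      ∀ u ∈ Ioo (max (sInf S) b) ℓ, u < f (f u) := by
  constructor
  · rintro hU u ⟨hlo, huℓ⟩
    obtain ⟨w, hw, hwu⟩ := exists_lt_of_csInf_lt ⟨ℓ, hℓ⟩ (le_max_left _ _ |>.trans_lt hlo)
    by_contra! hffu
    have hmem := mk_apply_mem_admissiblePairs hS hf hℓ hfℓ (hS hwu.le hw) huℓ.le
      ((le_max_right _ _).trans hlo.le) hffu
    rw [hU, mem_singleton_iff, Prod.mk.injEq] at hmem
    exact huℓ.ne hmem.1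
  · intro hcond
    ext ⟨u, v⟩
    rw [mem_singleton_iff, Prod.mk.injEq]
    constructor
    · intro h
      have hffu := apply_apply_le_of_mem_admissiblePairs hS hf hℓ h
      obtain ⟨hu, hv, hfv, huℓ, hℓv, hvfu, -⟩ := h
      rcases huℓ.eq_or_lt with rfl | huℓ
      · exact ⟨rfl, le_antisymm (hfℓ ▸ hvfu) hℓv⟩
      · have hbu : b < u := (hb v hv).trans_le hfv
        exact absurd hffu (hcond u ⟨max_lt (hinf u hu hbu) hbu, huℓ⟩).not_ge
    · rintro ⟨rfl, rfl⟩
      exact ⟨hℓ, hℓ, hfℓ.le, le_rfl, le_rfl, hfℓ.ge, (hfℓ ▸ hb _ hℓ).le⟩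

end AdmissiblePairs

theorem InhibOK.continuousOn {Φ : ℝ → ℝ} (hΦ : InhibOK Φ) : ContinuousOn Φ (Ici 0) := by
  obtain ⟨⟨K, -, hK⟩, -⟩ := hΦ
  refine (LipschitzOnWith.of_dist_le' (K := K) fun x hx y hy => ?_).continuousOn
  simpa only [Real.dist_eq] using hK x y hx hy

section Idom

variable {κ₁ κ₂ : ℝ} {ΦBA : ℝ → ℝ}

theorem isUpperSet_Idom (hanti : AntitoneOn ΦBA (Ici 0)) (hnonneg : ∀ x, 0 ≤ x → 0 ≤ ΦBA x)
    (hκ₂ : 0 ≤ κ₂) : IsUpperSet (Idom κ₁ κ₂ ΦBA) := by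
  rintro x y hxy ⟨hx, hxI⟩
  have hy : 0 ≤ y := hx.trans hxy
  refine ⟨hy, ?_⟩
  rcases le_or_gt 0 κ₁ with hκ₁ | hκ₁
  · refine lt_of_le_of_lt (mul_le_mul_of_nonneg_left ?_ hκ₁) hxI
    exact hanti (mul_nonneg hκ₂ hx) (mul_nonneg hκ₂ hy) (mul_le_mul_of_nonneg_left hxy hκ₂)
  · nlinarith [hnonneg _ (mul_nonneg hκ₂ hy)]

theorem sInf_Idom_lt (hcont : ContinuousOn ΦBA (Ici 0)) (hκ₂ : 0 < κ₂) {u : ℝ}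
    (hu : u ∈ Idom κ₁ κ₂ ΦBA) (hu₀ : 0 < u) : sInf (Idom κ₁ κ₂ ΦBA) < u := by
  have hcontAt : ContinuousAt (fun x => κ₁ * ΦBA (κ₂ * x)) u :=
    continuousAt_const.mul
      ((hcont.continuousAt (Ici_mem_nhds (mul_pos hκ₂ hu₀))).comp (continuousAt_const.mul
        continuousAt_id))
  have hnear : ∀ᶠ x in 𝓝 u, x ∈ Idom κ₁ κ₂ ΦBA :=
    (lt_mem_nhds hu₀).mono (fun x hx => hx.le) |>.and (hcontAt.eventually_lt
      continuousAt_const hu.2)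
  obtain ⟨w, hw, hwu⟩ := ((hnear.filter_mono nhdsWithin_le_nhds).and
    (self_mem_nhdsWithin : ∀ᶠ x in 𝓝[<] u, x < u)).exists
  exact (csInf_le ⟨0, fun x hx => hx.1⟩ hw).trans_lt hwu

end Idom

theorem div_le_PhiMap {μA μB κ₁ κ₂ κ₃ κ₄ : ℝ} {ΦBA ΦAB : ℝ → ℝ} (hμA : 0 ≤ μA)
    (hBA : ∀ x, 0 ≤ x → 0 ≤ ΦBA x) (hAB : ∀ x, 0 ≤ x → 0 ≤ ΦAB x)
    (hκ₂ : 0 ≤ κ₂) (hκ₃ : κ₃ < 1) (hκ₄ : 0 ≤ κ₄) {x : ℝ} (hx : x ∈ Idom κ₁ κ₂ ΦBA) :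
    μB / (1 - κ₃) ≤ PhiMap μA μB κ₁ κ₂ κ₃ κ₄ ΦBA ΦAB x := by
  have hPsi1 : 0 ≤ Psi1 μA κ₁ κ₂ ΦBA x :=
    div_nonneg (mul_nonneg hμA (hBA _ (mul_nonneg hκ₂ hx.1))) (sub_nonneg.2 hx.2.le)
  exact div_le_div_of_nonneg_right (le_add_of_nonneg_right (hAB _ (mul_nonneg hκ₄ hPsi1)))
    (sub_nonneg.2 hκ₃.le)

theorem stmt15_general
    (κ₁ κ₂ κ₃ κ₄ : ℝ)
    (ΦBA ΦAB : ℝ → ℝ) (hBA : InhibOK ΦBA) (hAB : FeedOK ΦAB)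
    (μA μB : ℝ) (hμA : 0 < μA) (hμB : 0 ≤ μB)
    (hk2 : 0 < κ₂) (hk4 : 0 < κ₄) (hk3 : κ₃ < 1)
    (ℓ : ℝ) (hℓmem : ℓ ∈ Idom κ₁ κ₂ ΦBA)
    (hℓfix : PhiMap μA μB κ₁ κ₂ κ₃ κ₄ ΦBA ΦAB ℓ = ℓ)
    (hstrict : StrictAntiOn (PhiMap μA μB κ₁ κ₂ κ₃ κ₄ ΦBA ΦAB)
      (Idom κ₁ κ₂ ΦBA)) :
    UPhi μA μB κ₁ κ₂ κ₃ κ₄ ΦBA ΦAB ℓ = {(ℓ, ℓ)} ↔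
    ∀ u ∈ Set.Ioo (max (sInf (Idom κ₁ κ₂ ΦBA)) (μB / (1 - κ₃))) ℓ,
      u < PhiMap μA μB κ₁ κ₂ κ₃ κ₄ ΦBA ΦAB
            (PhiMap μA μB κ₁ κ₂ κ₃ κ₄ ΦBA ΦAB u) := by
  have hBAnonneg : ∀ x, 0 ≤ x → 0 ≤ ΦBA x := fun x hx => (hBA.2.2.2.1 x hx).1
  have hS := isUpperSet_Idom (κ₁ := κ₁) hBA.2.1 hBAnonneg hk2.le
  have hb := forall_lt_apply_of_forall_le_apply hS hstrict
    (fun _ hy => div_le_PhiMap hμA.le hBAnonneg hAB.2.2.2.1 hk2.le hk3 hk4.le hy)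
  have hb₀ : 0 ≤ μB / (1 - κ₃) := div_nonneg hμB (sub_nonneg.2 hk3.le)
  -- `UPhi` unfolds to `admissiblePairs Φ I_{κ₁,κ₂} ℓ (μB / (1 - κ₃))`.
  exact admissiblePairs_eq_singleton_iff hS hstrict.antitoneOn hℓmem hℓfix hb
    fun u hu hbu => sInf_Idom_lt hBA.continuousOn hk2 hu (hb₀.trans_lt hbu)

/-- When `Φ` is strictly decreasing on `I_{κ₁,κ₂}`, Assumption U holds iff
`u < Φ(Φ(u))` on the open interval `(max(x*, μ_B/(1-κ₃)), ℓ)`. -/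
theorem stmt15
    (α : ℝ) (hα : α ∈ Set.Ioo (0:ℝ) 1)
    (h₁ h₂ h₃ h₄ : ℝ → ℝ)
    (hh₁ : KernelL1 h₁) (hh₂ : KernelL1 h₂) (hh₃ : KernelL1 h₃) (hh₄ : KernelL1 h₄)
    (κ₁ κ₂ κ₃ κ₄ : ℝ)
    (hκ₁ : κ₁ = α * l1 h₁) (hκ₂ : κ₂ = (1 - α) * l1 h₂)
    (hκ₃ : κ₃ = (1 - α) * l1 h₃) (hκ₄ : κ₄ = α * l1 h₄)
    (ΦBA ΦAB : ℝ → ℝ) (hBA : InhibOK ΦBA) (hAB : FeedOK ΦAB)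
    (μA μB : ℝ) (hμA : 0 < μA) (hμB : 0 ≤ μB)
    (hk2 : 0 < κ₂) (hk4 : 0 < κ₄) (hk3 : κ₃ < 1)
    (ℓ : ℝ) (hℓmem : ℓ ∈ Idom κ₁ κ₂ ΦBA)
    (hℓfix : PhiMap μA μB κ₁ κ₂ κ₃ κ₄ ΦBA ΦAB ℓ = ℓ)
    (hℓuniq : ∀ x ∈ Idom κ₁ κ₂ ΦBA,
      PhiMap μA μB κ₁ κ₂ κ₃ κ₄ ΦBA ΦAB x = x → x = ℓ)
    (hstrict : StrictAntiOn (PhiMap μA μB κ₁ κ₂ κ₃ κ₄ ΦBA ΦAB)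
      (Idom κ₁ κ₂ ΦBA)) :
    UPhi μA μB κ₁ κ₂ κ₃ κ₄ ΦBA ΦAB ℓ = {(ℓ, ℓ)} ↔
    ∀ u ∈ Set.Ioo (max (sInf (Idom κ₁ κ₂ ΦBA)) (μB / (1 - κ₃))) ℓ,
      u < PhiMap μA μB κ₁ κ₂ κ₃ κ₄ ΦBA ΦAB
            (PhiMap μA μB κ₁ κ₂ κ₃ κ₄ ΦBA ΦAB u) :=
  stmt15_general κ₁ κ₂ κ₃ κ₄ ΦBA ΦAB hBA hAB μA μB hμA hμB hk2 hk4 hk3 ℓ hℓmem hℓfix hstrict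
end

section
/- Let τ > 0, β ∈ (0,1], κ₁ ≥ 0, κ₂ > 0, a ≥ 0, μ > 0 with κ₁ < 1 + τa^β, and set ρ(y) = 1 − κ₁ + τy^β for y ≥ 0 and Φ(x) = a/κ₂ + μ/(κ₂ ρ(κ₂x)) for x ≥ a/κ₂. Then Φ maps [a/κ₂, ∞) into itself and the composition x ↦ Φ(Φ(x)) is concave on [a/κ₂, ∞). -/
/-!
With `ψ(y) = a + μ / ρ(y)` we have `κ₂ Φ(x) = ψ(κ₂ x)`, so it suffices that `ψ ∘ ψ` is concave on
`[a, ∞)`. There `ψ(ψ(y)) = a + μ G(ρ(y))` with `G(r) = 1 / ρ(a + μ / r)`; since `ρ` is concave, it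
is enough that `G` is concave and increasing on `(0, ∞)`. Concavity of `G` holds because
`μ G(r) = r q(a + μ / r)` is a perspective of `q(p) = (p - a) / ρ(p)`, and `q'' ≤ 0` on `(a, ∞)`
reduces to `a^β ((1 + β) p + (1 - β) a) ≤ p^β ((1 - β) p + (1 + β) a)` for `0 ≤ a ≤ p`, which
follows by monotonicity from Bernoulli's inequality.
-/

open Set

/-- `ρ(y) = 1 - κ₁ + τ y^β`. -/
noncomputable def rho (τ β κ₁ : ℝ) (y : ℝ) : ℝ := 1 - κ₁ + τ * y ^ β

/-- The fixed-point map `Φ(x) = a/κ₂ + μ/(κ₂ ρ(κ₂ x))` of the polynomial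
inhibition model. -/
noncomputable def PhiPoly (τ β κ₁ κ₂ a μ : ℝ) (x : ℝ) : ℝ :=
  a / κ₂ + μ / (κ₂ * rho τ β κ₁ (κ₂ * x))

lemma one_add_mul_add_le_rpow_mul {β t : ℝ} (hβ₀ : 0 ≤ β) (hβ₁ : β ≤ 1) (ht : 1 ≤ t) :
    (1 + β) * t + (1 - β) ≤ t ^ β * ((1 - β) * t + (1 + β)) := by
  let f : ℝ → ℝ := fun t => t ^ β * ((1 - β) * t + (1 + β)) - ((1 + β) * t + (1 - β))
  let f' : ℝ → ℝ := fun t => (1 + β) * ((1 - β) * t ^ β + β * t ^ (β - 1) - 1)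
  have hpow : ∀ t : ℝ, 0 < t → t * t ^ (β - 1) = t ^ β := fun t ht => by
    rw [Real.rpow_sub_one ht.ne']; field_simp
  have hf' : ∀ t ∈ interior (Ici (1 : ℝ)), HasDerivWithinAt f (f' t) (interior (Ici 1)) t := by
    intro t ht
    have ht₀ : 0 < t := one_pos.trans (by simpa using ht)
    have h₁ : HasDerivAt (fun t : ℝ => (1 - β) * t + (1 + β)) (1 - β) t := by
      simpa using ((hasDerivAt_id t).const_mul (1 - β)).add_const (1 + β)
    have h₂ : HasDerivAt (fun t : ℝ => (1 + β) * t + (1 - β)) (1 + β) t := by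
      simpa using ((hasDerivAt_id t).const_mul (1 + β)).add_const (1 - β)
    refine HasDerivAt.hasDerivWithinAt ?_
    refine (((Real.hasDerivAt_rpow_const (Or.inl ht₀.ne')).mul h₁).sub h₂).congr_deriv ?_
    linear_combination β * (1 - β) * hpow t ht₀
  have hf'₀ : ∀ t ∈ interior (Ici (1 : ℝ)), 0 ≤ f' t := by
    intro t ht
    have ht₀ : 0 < t := one_pos.trans (by simpa using ht)
    -- Bernoulli's inequality `t ^ (1 - β) ≤ 1 + (1 - β) (t - 1)`, multiplied by `t ^ (β - 1)`
    have hB := rpow_one_add_le_one_add_mul_self (s := t - 1) (by linarith)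
      (by linarith : 0 ≤ 1 - β) (by linarith)
    rw [add_sub_cancel] at hB
    have hB' := mul_le_mul_of_nonneg_right hB (by positivity : 0 ≤ t ^ (β - 1))
    have hinv : t ^ (1 - β) * t ^ (β - 1) = 1 := by
      rw [← Real.rpow_add ht₀]; norm_num
    exact mul_nonneg (by linarith) (by linear_combination hB' - hinv + (1 - β) * hpow t ht₀)
  have hmono := monotoneOn_of_hasDerivWithinAt_nonneg (convex_Ici 1)
    (by fun_prop (disch := intro x hx; exact Or.inl (one_pos.trans_le hx).ne')) hf' hf'₀
  have := hmono self_mem_Ici ht ht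
  simp only [f, Real.one_rpow] at this
  linarith

lemma rpow_mul_add_le_rpow_mul_add {β a p : ℝ} (hβ₀ : 0 < β) (hβ₁ : β ≤ 1) (ha : 0 ≤ a)
    (hap : a ≤ p) :
    a ^ β * ((1 + β) * p + (1 - β) * a) ≤ p ^ β * ((1 - β) * p + (1 + β) * a) := by
  rcases ha.eq_or_lt with rfl | ha₀
  · rw [Real.zero_rpow hβ₀.ne', zero_mul]
    have : 0 ≤ p ^ β := Real.rpow_nonneg hap β
    have : 0 ≤ 1 - β := by linarith
    positivity
  · obtain ⟨t, rfl⟩ : ∃ t, p = a * t := ⟨p / a, by field_simp⟩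
    have ht : 1 ≤ t := le_of_mul_le_mul_left (by simpa using hap) ha₀
    rw [Real.mul_rpow ha (by linarith)]
    linear_combination (a ^ β * a) * one_add_mul_add_le_rpow_mul hβ₀.le hβ₁ ht

section

variable {τ β κ₁ : ℝ}

lemma rho_le_rho {x y : ℝ} (hτ : 0 ≤ τ) (hβ : 0 ≤ β) (hx : 0 ≤ x) (hxy : x ≤ y) :
    rho τ β κ₁ x ≤ rho τ β κ₁ y := by
  unfold rho
  gcongr

lemma continuous_rho (hβ : 0 ≤ β) : Continuous (rho τ β κ₁) :=
  continuous_const.add (continuous_const.mul (Real.continuous_rpow_const hβ))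

lemma rho_concaveOn (hτ : 0 ≤ τ) (hβ₀ : 0 ≤ β) (hβ₁ : β ≤ 1) :
    ConcaveOn ℝ (Ici 0) (rho τ β κ₁) :=
  (concaveOn_const _ (convex_Ici 0)).add ((Real.concaveOn_rpow hβ₀ hβ₁).smul hτ)

lemma hasDerivAt_rho {p : ℝ} (hp : p ≠ 0) :
    HasDerivAt (rho τ β κ₁) (τ * (β * p ^ (β - 1))) p :=
  ((Real.hasDerivAt_rpow_const (Or.inl hp)).const_mul τ).const_add (1 - κ₁)

lemma sub_mul_le_two_mul_rho {a p : ℝ} (hτ : 0 ≤ τ) (hβ₀ : 0 < β) (hβ₁ : β ≤ 1) (ha : 0 ≤ a)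
    (hρa : 0 < rho τ β κ₁ a) (hap : a ≤ p) :
    (p - a) * ((1 - β) * rho τ β κ₁ p + 2 * β * τ * p ^ β) ≤ 2 * p * rho τ β κ₁ p := by
  have hB : 0 ≤ (1 + β) * p + (1 - β) * a := by nlinarith
  have := mul_le_mul_of_nonneg_left (rpow_mul_add_le_rpow_mul_add hβ₀ hβ₁ ha hap) hτ
  unfold rho at *
  linear_combination this + mul_nonneg hρa.le hB

lemma concaveOn_sub_div_rho {a : ℝ} (hτ : 0 ≤ τ) (hβ₀ : 0 < β) (hβ₁ : β ≤ 1) (ha : 0 ≤ a)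
    (hρa : 0 < rho τ β κ₁ a) :
    ConcaveOn ℝ (Ioi a) (fun p => (p - a) / rho τ β κ₁ p) := by
  have hρ : ∀ p ∈ Ioi a, 0 < rho τ β κ₁ p := fun p hp =>
    hρa.trans_le (rho_le_rho hτ hβ₀.le ha hp.le)
  let f' : ℝ → ℝ := fun p =>
    (rho τ β κ₁ p - (p - a) * (τ * (β * p ^ (β - 1)))) / rho τ β κ₁ p ^ 2
  let f'' : ℝ → ℝ := fun p => τ * β * p ^ (β - 2) *
    ((p - a) * ((1 - β) * rho τ β κ₁ p + 2 * β * τ * p ^ β) - 2 * p * rho τ β κ₁ p) /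
      rho τ β κ₁ p ^ 3
  have hf' : ∀ p ∈ Ioi a, HasDerivAt (fun p => (p - a) / rho τ β κ₁ p) (f' p) p := by
    intro p hp
    have hp₀ : p ≠ 0 := (ha.trans_lt hp).ne'
    refine (((hasDerivAt_id p).sub_const a).div (hasDerivAt_rho hp₀) (hρ p hp).ne').congr_deriv ?_
    simp only [f', id, one_mul]
  have hf'' : ∀ p ∈ Ioi a, HasDerivAt f' (f'' p) p := by
    intro p hp
    have hp₀ : 0 < p := ha.trans_lt hp
    have hρp := (hρ p hp).ne'
    have hnum := (hasDerivAt_rho (τ := τ) (β := β) (κ₁ := κ₁) hp₀.ne').sub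
      (((hasDerivAt_id p).sub_const a).mul
        (((Real.hasDerivAt_rpow_const (p := β - 1) (Or.inl hp₀.ne')).const_mul β).const_mul τ))
    refine (hnum.div ((hasDerivAt_rho hp₀.ne').pow 2) (pow_ne_zero 2 hρp)).congr_deriv ?_
    have hpow : p ^ (β - 2) = p ^ (β - 1 - 1) := by ring_nf
    simp only [f'', hpow, Real.rpow_sub_one hp₀.ne', id, Pi.sub_apply, Pi.mul_apply, Pi.pow_apply]
    generalize rho τ β κ₁ p = r at hρp ⊢
    field_simp
    ring
  refine concaveOn_of_hasDerivWithinAt2_nonpos (convex_Ioi a)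
    (fun p hp => (hf' p hp).continuousAt.continuousWithinAt)
    (fun p hp => (hf' p (by simpa using hp)).hasDerivWithinAt)
    (fun p hp => (hf'' p (by simpa using hp)).hasDerivWithinAt) fun p hp => ?_
  rw [interior_Ioi] at hp
  have hp₀ : 0 < p := ha.trans_lt hp
  have hρp := hρ p hp
  have hkey := sub_mul_le_two_mul_rho hτ hβ₀ hβ₁ ha hρa hp.le
  simp only [f'']
  exact div_nonpos_of_nonpos_of_nonneg
    (mul_nonpos_of_nonneg_of_nonpos (by positivity) (by linarith)) (by positivity)

lemma ConcaveOn.mul_apply_add_div {f : ℝ → ℝ} {a μ : ℝ} (hμ : 0 < μ)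
    (hf : ConcaveOn ℝ (Ioi a) f) : ConcaveOn ℝ (Ioi 0) (fun s => s * f (a + μ / s)) := by
  refine ⟨convex_Ioi 0, fun x (hx : 0 < x) y (hy : 0 < y) u v hu hv huv => ?_⟩
  simp only [smul_eq_mul]
  set s := u * x + v * y
  have hs : 0 < s := by
    rcases hu.eq_or_lt with rfl | hu₀ <;> nlinarith
  have hmem : ∀ z, 0 < z → a + μ / z ∈ Ioi a := fun z hz => by
    simpa using div_pos hμ hz
  -- `a + μ / s` is the convex combination of `a + μ / x` and `a + μ / y`
  -- with weights `u x / s` and `v y / s`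
  have hcomb := hf.2 (hmem x hx) (hmem y hy) (by positivity : 0 ≤ u * x / s)
    (by positivity : 0 ≤ v * y / s) (by rw [← add_div, div_self hs.ne'])
  have hpt : u * x / s * (a + μ / x) + v * y / s * (a + μ / y) = a + μ / s := by
    field_simp
    linear_combination μ * huv
  simp only [smul_eq_mul, hpt] at hcomb
  calc u * (x * f (a + μ / x)) + v * (y * f (a + μ / y))
      = s * (u * x / s * f (a + μ / x) + v * y / s * f (a + μ / y)) := by field_simp
    _ ≤ s * f (a + μ / s) := mul_le_mul_of_nonneg_left hcomb hs.le

lemma monotoneOn_inv_rho_add_div {a μ : ℝ} (hτ : 0 ≤ τ) (hβ : 0 ≤ β) (ha : 0 ≤ a) (hμ : 0 ≤ μ)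
    (hρa : 0 < rho τ β κ₁ a) :
    MonotoneOn (fun r => (rho τ β κ₁ (a + μ / r))⁻¹) (Ioi 0) := by
  intro r (hr : 0 < r) r' (hr' : 0 < r') hrr'
  have h₁ : a ≤ a + μ / r' := le_add_of_nonneg_right (by positivity)
  have h₂ : a + μ / r' ≤ a + μ / r := by gcongr
  exact inv_anti₀ (hρa.trans_le (rho_le_rho hτ hβ ha h₁)) (rho_le_rho hτ hβ (ha.trans h₁) h₂)

lemma concaveOn_inv_rho_add_div {a μ : ℝ} (hτ : 0 ≤ τ) (hβ₀ : 0 < β) (hβ₁ : β ≤ 1) (ha : 0 ≤ a)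
    (hμ : 0 < μ) (hρa : 0 < rho τ β κ₁ a) :
    ConcaveOn ℝ (Ioi 0) (fun r => (rho τ β κ₁ (a + μ / r))⁻¹) :=
  (((concaveOn_sub_div_rho hτ hβ₀ hβ₁ ha hρa).mul_apply_add_div hμ).smul
    (inv_nonneg.2 hμ.le)).congr fun r (hr : 0 < r) => by
      simp only [smul_eq_mul, add_sub_cancel_left]
      field_simp

lemma concaveOn_add_div_rho_add_div_rho {a μ : ℝ} (hτ : 0 ≤ τ) (hβ₀ : 0 < β) (hβ₁ : β ≤ 1)
    (ha : 0 ≤ a) (hμ : 0 < μ) (hρa : 0 < rho τ β κ₁ a) :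
    ConcaveOn ℝ (Ici a) (fun y => a + μ / rho τ β κ₁ (a + μ / rho τ β κ₁ y)) := by
  have hρ : ConcaveOn ℝ (Ici a) (rho τ β κ₁) :=
    (rho_concaveOn hτ hβ₀.le hβ₁).subset (Ici_subset_Ici.2 ha) (convex_Ici a)
  have himage : rho τ β κ₁ '' Ici a ⊆ Ioi 0 := by
    rintro _ ⟨y, hy, rfl⟩
    exact hρa.trans_le (rho_le_rho hτ hβ₀.le ha hy)
  have hconv : Convex ℝ (rho τ β κ₁ '' Ici a) := Real.convex_iff_isPreconnected.2
    (isPreconnected_Ici.image _ (continuous_rho hβ₀.le).continuousOn)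
  have hcomp := ((concaveOn_inv_rho_add_div hτ hβ₀ hβ₁ ha hμ hρa).subset himage hconv).comp hρ
    ((monotoneOn_inv_rho_add_div hτ hβ₀.le ha hμ.le hρa).mono himage)
  exact ((concaveOn_const a (convex_Ici a)).add (hcomp.smul hμ.le)).congr fun y _ => by
    simp [div_eq_mul_inv]

lemma PhiPoly_eq (κ₂ a μ x : ℝ) :
    PhiPoly τ β κ₁ κ₂ a μ x = (a + μ / rho τ β κ₁ (κ₂ * x)) / κ₂ := by
  rw [PhiPoly, add_div, div_div, mul_comm]

end

theorem stmt17_general (τ β κ₁ κ₂ a μ : ℝ)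
    (hτ : 0 < τ) (hβ : 0 < β ∧ β ≤ 1) (hκ₂ : 0 < κ₂)
    (ha : 0 ≤ a) (hμ : 0 < μ) (hcrit : κ₁ < 1 + τ * a ^ β) :
    (∀ x, a / κ₂ ≤ x → a / κ₂ ≤ PhiPoly τ β κ₁ κ₂ a μ x) ∧
    ConcaveOn ℝ (Set.Ici (a / κ₂))
      (fun x => PhiPoly τ β κ₁ κ₂ a μ (PhiPoly τ β κ₁ κ₂ a μ x)) := by
  obtain ⟨hβ₀, hβ₁⟩ := hβ
  have hρa : 0 < rho τ β κ₁ a := by unfold rho; linarith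
  refine ⟨fun x hx => ?_, ?_⟩
  · have hρx := hρa.trans_le (rho_le_rho hτ.le hβ₀.le ha ((div_le_iff₀' hκ₂).1 hx))
    have : 0 ≤ μ / (κ₂ * rho τ β κ₁ (κ₂ * x)) := by positivity
    unfold PhiPoly
    linarith
  · -- `κ₂ Φ(x) = ψ(κ₂ x)` with `ψ(y) = a + μ / ρ(y)`
    have h := (((concaveOn_add_div_rho_add_div_rho hτ.le hβ₀ hβ₁ ha hμ hρa).comp_linearMap
      (LinearMap.mulLeft ℝ κ₂)).subset (fun x hx => (div_le_iff₀' hκ₂).1 hx) (convex_Ici _)).smul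
      (inv_nonneg.2 hκ₂.le)
    refine h.congr fun x _ => ?_
    simp only [Function.comp_apply, LinearMap.mulLeft_apply, smul_eq_mul, PhiPoly_eq,
      mul_div_cancel₀ _ hκ₂.ne', inv_mul_eq_div]

/-- Key algebraic lemma: `Φ` maps `[a/κ₂, ∞)` into itself and `Φ ∘ Φ` is concave
on `[a/κ₂, ∞)`. -/
theorem stmt17 (τ β κ₁ κ₂ a μ : ℝ)
    (hτ : 0 < τ) (hβ : 0 < β ∧ β ≤ 1) (hκ₁ : 0 ≤ κ₁) (hκ₂ : 0 < κ₂)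
    (ha : 0 ≤ a) (hμ : 0 < μ) (hcrit : κ₁ < 1 + τ * a ^ β) :
    (∀ x, a / κ₂ ≤ x → a / κ₂ ≤ PhiPoly τ β κ₁ κ₂ a μ x) ∧
    ConcaveOn ℝ (Set.Ici (a / κ₂))
      (fun x => PhiPoly τ β κ₁ κ₂ a μ (PhiPoly τ β κ₁ κ₂ a μ x)) :=
  stmt17_general τ β κ₁ κ₂ a μ hτ hβ hκ₂ ha hμ hcrit
end
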